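/- Sumset entropy increase formula: if X, Y are independent G-valued random variables, then Σ_y p_Y(y) Σ_z p_{X+y}(z) · log⁺( p_{X+y}(z) / p_{X+Y}(z) ) = H(X+Y) − H(X) + O(1), where the O(1) error is bounded by an absolute constant and log⁺ t = max(log t, 0). -/

import Mathlib

open Real
open scoped BigOperators Pointwise Classical

/-- A finitely supported probability space. -/
structure FinProb (Ω : Type*) [Fintype Ω] where
  p : Ω → ℝ
  nonneg : ∀ ω, 0 ≤ p ω
  sum_one : ∑ ω, p ω = 1

/-- Probability that the random variable `X` takes the value `s`. -/
noncomputable def prob {Ω S : Type*} [Fintype Ω] (μ : FinProb Ω) (X : Ω → S) (s : S) : ℝ :=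
  ∑ ω, if X ω = s then μ.p ω else 0

/-- Shannon entropy of a discrete random variable. -/
noncomputable def entropy {Ω S : Type*} [Fintype Ω] (μ : FinProb Ω) (X : Ω → S) : ℝ :=
  ∑ s ∈ Finset.univ.image X, Real.negMulLog (prob μ X s)

/-- Conditional Shannon entropy `H(X|Y) = H(X,Y) - H(Y)`. -/
noncomputable def condEntropy {Ω S T : Type*} [Fintype Ω] (μ : FinProb Ω)
    (X : Ω → S) (Y : Ω → T) : ℝ :=
  entropy μ (fun ω => (X ω, Y ω)) - entropy μ Y

/-- The essential range of a random variable: values attained with positive probability. -/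
noncomputable def rangeF {Ω S : Type*} [Fintype Ω] (μ : FinProb Ω) (X : Ω → S) : Finset S :=
  (Finset.univ.image X).filter (fun s => prob μ X s ≠ 0)

/-- Two random variables (on possibly different spaces) have the same distribution. -/
def IdentDist {Ω Ω' S : Type*} [Fintype Ω] [Fintype Ω'] (μ : FinProb Ω) (X : Ω → S)
    (μ' : FinProb Ω') (Y : Ω' → S) : Prop :=
  ∀ s, prob μ X s = prob μ' Y s

/-- Independence of two random variables. -/
def IndepRV {Ω S T : Type*} [Fintype Ω] (μ : FinProb Ω) (X : Ω → S) (Y : Ω → T) : Prop :=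
  ∀ s t, prob μ (fun ω => (X ω, Y ω)) (s, t) = prob μ X s * prob μ Y t

/-- Joint independence of a finite family of random variables. -/
def IndepFam {Ω ι : Type*} [Fintype Ω] [Fintype ι] {S : ι → Type*}
    (μ : FinProb Ω) (X : ∀ i, Ω → S i) : Prop :=
  ∀ f : ∀ i, S i, prob μ (fun ω i => X i ω) f = ∏ i, prob μ (X i) (f i)

/-- `X` and `Y` are conditionally independent given `W`. -/
def CondIndepGiven {Ω S T U : Type*} [Fintype Ω] (μ : FinProb Ω)
    (X : Ω → S) (Y : Ω → T) (W : Ω → U) : Prop :=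
  ∀ s t u, prob μ (fun ω => (X ω, Y ω, W ω)) (s, t, u) * prob μ W u
    = prob μ (fun ω => (X ω, W ω)) (s, u) * prob μ (fun ω => (Y ω, W ω)) (t, u)

/-- `Y` is determined by `X` (almost surely). -/
def Determines {Ω S T : Type*} [Fintype Ω] (μ : FinProb Ω) (X : Ω → S) (Y : Ω → T) : Prop :=
  ∃ f : S → T, ∀ ω, μ.p ω ≠ 0 → Y ω = f (X ω)

/-- The entropy transport distance between the distributions of `X` and `Y`:
the infimum of `H(Z)` over random variables `Z` (coupled with a copy `X'` of `X`)
such that `X' + Z` is distributed as `Y`. -/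
noncomputable def transDist {Ω₁ Ω₂ G : Type*} [Fintype Ω₁] [Fintype Ω₂] [AddCommGroup G]
    (μ : FinProb Ω₁) (X : Ω₁ → G) (ν : FinProb Ω₂) (Y : Ω₂ → G) : ℝ :=
  sInf {h : ℝ | ∃ (n : ℕ) (μ' : FinProb (Fin n)) (X' Z : Fin n → G),
    IdentDist μ' X' μ X ∧ IdentDist μ' (fun ω => X' ω + Z ω) ν Y ∧ entropy μ' Z = h}

/-- Conditioning a finitely supported probability space on an event `E`
(returning `μ` unchanged if `E` has zero probability). -/
noncomputable def condFinProb {Ω : Type*} [Fintype Ω] (μ : FinProb Ω) (E : Ω → Prop) :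
    FinProb Ω :=
  if h : 0 < ∑ ω, if E ω then μ.p ω else 0 then
    { p := fun ω => if E ω then μ.p ω / (∑ ω', if E ω' then μ.p ω' else 0) else 0
      nonneg := fun ω => by
        split
        · exact div_nonneg (μ.nonneg ω) h.le
        · exact le_refl 0
      sum_one := by
        have h' : ∀ ω, (if E ω then μ.p ω / (∑ ω', if E ω' then μ.p ω' else 0) else 0)
            = (if E ω then μ.p ω else 0) / (∑ ω', if E ω' then μ.p ω' else 0) := by
          intro ω; split <;> simp
        rw [Finset.sum_congr rfl (fun ω _ => h' ω), ← Finset.sum_div, div_self h.ne'] }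
  else μ

/-
Write `p = p_X` and `q = p_{X+Y}`. Without the truncation `log⁺` the left-hand side is exactly
`H(X+Y) − H(X)`: for each `y` the inner sum of `p(z−y) log p(z−y)` is `−H(X)` after the shift
`z ↦ z − y`, and averaging `log q(z)` against `p_Y(y) p(z−y)` recovers `−H(X+Y)` because
`q = p ∗ p_Y`. Since `log⁺ t − log t = log⁺ (1/t)` and `a log⁺ (b/a) ≤ b`, the truncation adds a
nonnegative amount of at most `Σ_y p_Y(y) Σ_z q(z) = 1`, so `C = 1` works.
-/

open Finset

lemma Real.mul_posLog_div_le {a b : ℝ} (ha : 0 ≤ a) (hb : 0 ≤ b) : a * posLog (b / a) ≤ b := by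
  rcases ha.eq_or_lt with rfl | ha
  · simpa using hb
  calc a * posLog (b / a) ≤ a * (b / a) := by
        gcongr
        have hba : 0 ≤ b / a := by positivity
        exact max_le hba (Real.log_le_self hba)
    _ = b := by field_simp

lemma Real.max_log_zero_sub_log (x : ℝ) : max (Real.log x) 0 - Real.log x = posLog x⁻¹ := by
  have h := posLog_sub_posLog_inv (x := x)
  rw [posLog_apply] at h
  rw [max_comm]
  linarith

section Prob

variable {Ω S : Type*} [Fintype Ω] (μ : FinProb Ω) (X : Ω → S)

lemma prob_nonneg (s : S) : 0 ≤ prob μ X s :=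
  sum_nonneg fun ω _ => by split <;> simp [μ.nonneg ω]

lemma mem_image_of_prob_ne_zero {s : S} (h : prob μ X s ≠ 0) : s ∈ univ.image X := by
  contrapose! h
  exact sum_eq_zero fun ω _ => if_neg fun (he : X ω = s) => h (he ▸ mem_image_of_mem X (mem_univ ω))

lemma sum_rangeF_eq_sum_image (f : S → ℝ) (hf : ∀ s, prob μ X s = 0 → f s = 0) :
    ∑ s ∈ rangeF μ X, f s = ∑ s ∈ univ.image X, f s :=
  sum_filter_of_ne fun s _ hs h0 => hs (hf s h0)

lemma sum_prob_rangeF : ∑ s ∈ rangeF μ X, prob μ X s = 1 := by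
  rw [sum_rangeF_eq_sum_image μ X _ fun _ h => h, ← μ.sum_one]
  unfold prob
  rw [sum_comm]
  exact sum_congr rfl fun ω _ => by simp

lemma entropy_eq_neg_sum_rangeF :
    entropy μ X = -∑ s ∈ rangeF μ X, prob μ X s * Real.log (prob μ X s) := by
  rw [sum_rangeF_eq_sum_image μ X _ fun _ h => by simp [h], entropy, ← sum_neg_distrib]
  simp only [Real.negMulLog, neg_mul]

end Prob

section Sumset

variable {Ω G : Type*} [Fintype Ω] [AddCommGroup G] {μ : FinProb Ω} {X Y : Ω → G}

lemma IndepRV.prob_add_eq_sum (h : IndepRV μ X Y) (z : G) :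
    prob μ (fun ω => X ω + Y ω) z = ∑ y ∈ rangeF μ Y, prob μ X (z - y) * prob μ Y y := by
  rw [sum_rangeF_eq_sum_image μ Y _ fun _ h0 => by rw [h0, mul_zero]]
  calc prob μ (fun ω => X ω + Y ω) z
      = ∑ y ∈ univ.image Y, prob μ (fun ω => (X ω, Y ω)) (z - y, y) := by
        unfold prob
        rw [sum_comm]
        refine sum_congr rfl fun ω _ => ?_
        rw [sum_eq_single_of_mem (Y ω) (mem_image_of_mem Y (mem_univ ω))]
        · simp [eq_sub_iff_add_eq]
        · intro y _ hy
          simp [Ne.symm hy]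
    _ = ∑ y ∈ univ.image Y, prob μ X (z - y) * prob μ Y y :=
        sum_congr rfl fun y _ => h (z - y) y

lemma IndepRV.prob_mul_le_prob_add (h : IndepRV μ X Y) (x y : G) :
    prob μ X x * prob μ Y y ≤ prob μ (fun ω => X ω + Y ω) (x + y) := by
  rcases eq_or_ne (prob μ Y y) 0 with hy | hy
  · rw [hy, mul_zero]
    exact prob_nonneg _ _ _
  have hmem : y ∈ rangeF μ Y := mem_filter.2 ⟨mem_image_of_prob_ne_zero μ Y hy, hy⟩
  rw [h.prob_add_eq_sum]
  simpa using single_le_sum (f := fun y' => prob μ X (x + y - y') * prob μ Y y')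
    (fun _ _ => mul_nonneg (prob_nonneg _ _ _) (prob_nonneg _ _ _)) hmem

lemma IndepRV.sum_rangeF_add_comp_sub (h : IndepRV μ X Y) {y : G} (hy : prob μ Y y ≠ 0)
    (g : ℝ → ℝ) (hg : g 0 = 0) :
    ∑ z ∈ rangeF μ (fun ω => X ω + Y ω), g (prob μ X (z - y))
      = ∑ x ∈ rangeF μ X, g (prob μ X x) := by
  rw [← sum_filter_of_ne (p := fun z => prob μ X (z - y) ≠ 0) fun z _ hz h0 => hz (by rw [h0, hg])]
  refine sum_nbij' (· - y) (· + y) ?_ ?_ (fun z _ => sub_add_cancel z y)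
    (fun x _ => add_sub_cancel_right x y) fun _ _ => rfl
  · intro z hz
    have hz := (mem_filter.1 hz).2
    exact mem_filter.2 ⟨mem_image_of_prob_ne_zero μ X hz, hz⟩
  · intro x hx
    have hx := (mem_filter.1 hx).2
    have hq : prob μ (fun ω => X ω + Y ω) (x + y) ≠ 0 :=
      ((mul_pos ((prob_nonneg μ X x).lt_of_ne' hx) ((prob_nonneg μ Y y).lt_of_ne' hy)).trans_le
        (h.prob_mul_le_prob_add x y)).ne'
    simp [rangeF, mem_image_of_prob_ne_zero _ _ hq, hq, hx]

lemma IndepRV.sum_prob_mul_sum_mul_log_prob_add (h : IndepRV μ X Y) :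
    ∑ y ∈ rangeF μ Y, prob μ Y y * ∑ z ∈ rangeF μ (fun ω => X ω + Y ω),
      prob μ X (z - y) * Real.log (prob μ (fun ω => X ω + Y ω) z)
      = -entropy μ (fun ω => X ω + Y ω) := by
  rw [entropy_eq_neg_sum_rangeF, neg_neg]
  simp_rw [mul_sum]
  rw [sum_comm]
  refine sum_congr rfl fun z _ => ?_
  generalize Real.log (prob μ (fun ω => X ω + Y ω) z) = L
  rw [h.prob_add_eq_sum z, sum_mul]
  exact sum_congr rfl fun y _ => by ring

theorem IndepRV.sum_prob_mul_sum_mul_log_div_eq_entropy_sub (h : IndepRV μ X Y) :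
    ∑ y ∈ rangeF μ Y, prob μ Y y * ∑ z ∈ rangeF μ (fun ω => X ω + Y ω),
      prob μ X (z - y) * Real.log (prob μ X (z - y) / prob μ (fun ω => X ω + Y ω) z)
      = entropy μ (fun ω => X ω + Y ω) - entropy μ X := by
  have hsplit : ∀ y ∈ rangeF μ Y, prob μ Y y * ∑ z ∈ rangeF μ (fun ω => X ω + Y ω),
      prob μ X (z - y) * Real.log (prob μ X (z - y) / prob μ (fun ω => X ω + Y ω) z)
      = prob μ Y y * -entropy μ X - prob μ Y y * ∑ z ∈ rangeF μ (fun ω => X ω + Y ω),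
        prob μ X (z - y) * Real.log (prob μ (fun ω => X ω + Y ω) z) := by
    intro y hy
    rw [entropy_eq_neg_sum_rangeF, neg_neg,
      ← h.sum_rangeF_add_comp_sub (mem_filter.1 hy).2 (fun t => t * Real.log t) (by simp),
      ← mul_sub, ← sum_sub_distrib]
    refine congrArg _ (sum_congr rfl fun z hz => ?_)
    rcases eq_or_ne (prob μ X (z - y)) 0 with h0 | h0
    · simp [h0]
    · rw [Real.log_div h0 (mem_filter.1 hz).2, mul_sub]
  rw [sum_congr rfl hsplit, sum_sub_distrib, ← sum_mul, sum_prob_rangeF,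
    h.sum_prob_mul_sum_mul_log_prob_add]
  ring

end Sumset

/-- sumset entropy increase formula: there is an absolute constant `C`
such that for independent `G`-valued `X, Y`,
`|Σ_y p_Y(y) Σ_z p_{X+y}(z)·log⁺(p_{X+y}(z)/p_{X+Y}(z)) − (H(X+Y) − H(X))| ≤ C`,
where `y` ranges over the support of `Y` and `z` over the support of `X+Y`. -/
theorem sumset_entropy_increase :
    ∃ C : ℝ, ∀ (G : Type) [AddCommGroup G] (Ω : Type) [Fintype Ω]
      (μ : FinProb Ω) (X Y : Ω → G), IndepRV μ X Y →
      |(∑ y ∈ rangeF μ Y, prob μ Y y *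
          ∑ z ∈ rangeF μ (fun ω => X ω + Y ω), prob μ X (z - y) *
            max (Real.log (prob μ X (z - y) / prob μ (fun ω => X ω + Y ω) z)) 0)
        - (entropy μ (fun ω => X ω + Y ω) - entropy μ X)| ≤ C := by
  refine ⟨1, fun G _ Ω _ μ X Y hXY => ?_⟩
  rw [← hXY.sum_prob_mul_sum_mul_log_div_eq_entropy_sub, ← sum_sub_distrib]
  simp only [← mul_sub, ← sum_sub_distrib, Real.max_log_zero_sub_log, inv_div]
  have hgap_nonneg : 0 ≤ ∑ y ∈ rangeF μ Y, prob μ Y y * ∑ z ∈ rangeF μ (fun ω => X ω + Y ω),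
      prob μ X (z - y) * Real.posLog (prob μ (fun ω => X ω + Y ω) z / prob μ X (z - y)) :=
    sum_nonneg fun y _ => mul_nonneg (prob_nonneg _ _ _) <|
      sum_nonneg fun z _ => mul_nonneg (prob_nonneg _ _ _) Real.posLog_nonneg
  rw [abs_of_nonneg hgap_nonneg]
  calc _ ≤ ∑ y ∈ rangeF μ Y, prob μ Y y *
        ∑ z ∈ rangeF μ (fun ω => X ω + Y ω), prob μ (fun ω => X ω + Y ω) z := by
        gcongr with y _ z _
        · exact prob_nonneg _ _ _
        · exact Real.mul_posLog_div_le (prob_nonneg _ _ _) (prob_nonneg _ _ _)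
    _ = 1 := by simp only [sum_prob_rangeF, mul_one]
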